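/- Fix integers m ≥ 0, k ≥ 1 and n with n ≥ 2k + m, real constants c₁,…,c_k, real numbers π_{k+1},…,π_n, and E ∈ ℂ, and set ε = E − Σ_{j=k+1}^{⌊(n−m)/2⌋} π_{n−m+1−j} π_j − ((n−m−2⌊(n−m)/2⌋)/2) π²_{n−m−⌊(n−m)/2⌋} − ½ Σ_{j=n−m+1}^{n} π_j π_{2n−m+1−j}. Suppose ψ: ℝⁿ → ℂ is a smooth, nowhere-vanishing function satisfying ℋψ = Eψ and 𝒫_jψ = π_j ψ for all j = k+1,…,n. Then ψ is quasiclassical: there exists a smooth function S₀: ℝ^k → ℂ satisfying the reduced Hamilton–Jacobi equation Σ_{j=1}^{k} π_{n−m+1−j} ∂S₀/∂r^j + Σ_{j=1}^{k} c_j V_1^{(j)}(φ(r)) = ε such that ψ(r) = exp( i ( S₀(r¹,…,r^k) + Σ_{j=k+1}^{n} π_j r^j ) ) for all r ∈ ℝⁿ. -/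

import Mathlib

open Finset Complex

noncomputable section

/-- Component of `v : Fin n → ℝ` with label `t ∈ {1,…,n}` (and `0` otherwise). -/
def get (n : ℕ) (v : Fin n → ℝ) (t : ℕ) : ℝ :=
  if h : 1 ≤ t ∧ t ≤ n then v ⟨t - 1, by omega⟩ else 0

/-- The unit vector in `Fin n → ℝ` with label `i ∈ {1,…,n}`. -/
def evec (n i : ℕ) : Fin n → ℝ := fun t => if (t : ℕ) + 1 = i then 1 else 0

/-- The map `φ : ℝⁿ → ℝⁿ`, `r ↦ q`. -/
def phi (n m : ℕ) (r : Fin n → ℝ) : Fin n → ℝ := fun i =>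
  if (i : ℕ) + 1 ≤ n - m then
    r i + (1/4) * ∑ j ∈ Finset.Icc 1 ((i : ℕ) + 1 - 1), get n r j * get n r ((i : ℕ) + 1 - j)
  else
    -(1/4) * ∑ j ∈ Finset.Icc ((i : ℕ) + 1) n, get n r j * get n r (n - j + ((i : ℕ) + 1))

/-- `φ(r)` extended to all labels, with `q⁰ = 1` and `q^i = 0` for `i > n`. -/
def qe (n m : ℕ) (r : Fin n → ℝ) (t : ℕ) : ℝ :=
  if t = 0 then 1 else get n (phi n m r) t

/-- Basic separable potentials with non-negative superscript: `Vpos k r q = V_r^{(k)}`. -/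
def Vpos : ℕ → ℕ → (ℕ → ℝ) → ℝ
  | 0, _, _ => 0
  | 1, r, q => -q r
  | (k+2), r, q => Vpos (k+1) (r+1) q + (-q r) * Vpos (k+1) 1 q

/-- Second partial derivative `∂²ψ/∂r^a∂r^b` (labels `a, b ∈ {1,…,n}`). -/
def D2 (n : ℕ) (ψ : (Fin n → ℝ) → ℂ) (r : Fin n → ℝ) (a b : ℕ) : ℂ :=
  fderiv ℝ (fun w => fderiv ℝ ψ w (evec n b)) r (evec n a)

/-- The Schrödinger operator `ℋ = −½(Σ_{a=1}^{n−m} ∂²/∂r^a∂r^{n−m+1−a} +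
Σ_{b=n−m+1}^{n} ∂²/∂r^b∂r^{2n−m+1−b}) + Σ_{j=1}^{k} c_j V_1^{(j)}(φ(r))`. -/
def Hop (n m k : ℕ) (c : ℕ → ℝ) (ψ : (Fin n → ℝ) → ℂ) (r : Fin n → ℝ) : ℂ :=
  -(1/2) * (∑ a ∈ Finset.Icc 1 (n - m), D2 n ψ r a (n - m + 1 - a) +
      ∑ b ∈ Finset.Icc (n - m + 1) n, D2 n ψ r b (2 * n - m + 1 - b)) +
    (∑ j ∈ Finset.Icc 1 k, (c j : ℂ) * (Vpos j 1 (qe n m r) : ℝ)) * ψ r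

lemma aux_const_dir {E : Type*} [NormedAddCommGroup E] [NormedSpace ℝ E]
    (f : E → ℂ) (hf : Differentiable ℝ f) (v : E)
    (hv : ∀ x, fderiv ℝ f x v = 0) (x : E) : f (x + v) = f x := by
  have key : ∀ t : ℝ, HasDerivAt (fun t : ℝ => f (x + t • v)) 0 t := by
    intro t
    have h1 : HasDerivAt (fun t : ℝ => x + t • v) v t := by
      simpa using ((hasDerivAt_id t).smul_const v).const_add x
    have h2 := (hf (x + t • v)).hasFDerivAt.comp_hasDerivAt t h1
    simpa [hv, Function.comp_def] using h2
  have hconst := is_const_of_deriv_eq_zero (fun t => (key t).differentiableAt)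
      (fun t => (key t).deriv) 1 0
  simpa using hconst

lemma aux_reflect {M : Type*} [AddCommMonoid M] (f : ℕ → M) (a b N : ℕ) (hb : b ≤ N) :
    ∑ j ∈ Finset.Icc a b, f j = ∑ j ∈ Finset.Icc (N + 1 - b) (N + 1 - a), f (N + 1 - j) := by
  refine Finset.sum_nbij' (fun j => N + 1 - j) (fun j => N + 1 - j) ?_ ?_ ?_ ?_ ?_ <;>
      simp only [Finset.mem_Icc] <;> intro x hx
  · omega
  · omega
  · omega
  · omega
  · congr 1; omega

lemma aux_fold (pp : ℕ → ℝ) (k N : ℕ) (hN : 2 * k ≤ N) :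
    ∑ a ∈ Finset.Icc (k+1) (N-k), pp a * pp (N+1-a)
      = 2 * (∑ j ∈ Finset.Icc (k+1) (N/2), pp (N+1-j) * pp j)
        + ((N - 2*(N/2) : ℕ) : ℝ) * pp (N - N/2)^2 := by
  have hp1 : k ≤ N/2 := by omega
  have hp2 : N/2 ≤ N - k := by omega
  have e1 : Finset.Icc (k+1) (N-k) = Finset.Ioc k (N-k) := by
    ext x; simp [Finset.mem_Icc, Finset.mem_Ioc] <;> omega
  rw [e1, ← Finset.sum_Ioc_consecutive _ hp1 hp2]
  have h2 : ∑ a ∈ Finset.Ioc k (N/2), pp a * pp (N+1-a)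
      = ∑ j ∈ Finset.Icc (k+1) (N/2), pp (N+1-j) * pp j := by
    rw [show Finset.Ioc k (N/2) = Finset.Icc (k+1) (N/2) by
      ext x; simp [Finset.mem_Icc, Finset.mem_Ioc] <;> omega]
    exact Finset.sum_congr rfl fun x _ => mul_comm _ _
  have h3 : ∑ a ∈ Finset.Ioc (N/2) (N-k), pp a * pp (N+1-a)
      = ∑ j ∈ Finset.Icc (k+1) (N - N/2), pp (N+1-j) * pp j := by
    rw [show Finset.Ioc (N/2) (N-k) = Finset.Icc (N/2+1) (N-k) by
      ext x; simp [Finset.mem_Icc, Finset.mem_Ioc] <;> omega]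
    rw [aux_reflect _ (N/2+1) (N-k) N (by omega)]
    rw [show N+1-(N-k) = k+1 by omega, show N+1-(N/2+1) = N - N/2 by omega]
    refine Finset.sum_congr rfl fun j hj => ?_
    simp only [Finset.mem_Icc] at hj
    rw [show N+1-(N+1-j) = j by omega]
  rw [h2, h3]
  rcases (show N - N/2 = N/2 ∨ N - N/2 = N/2 + 1 by omega) with hc | hc
  · rw [hc, show N - 2*(N/2) = 0 by omega]
    push_cast; ring
  · rw [hc, Finset.sum_Icc_succ_top (by omega : k+1 ≤ N/2+1), show N+1-(N/2+1) = N - N/2 by omega,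
      show N - 2*(N/2) = 1 by omega, hc]
    push_cast; ring



lemma aux_exists_log {E : Type*} [NormedAddCommGroup E] [NormedSpace ℝ E]
    (ψ : E → ℂ) (hψ : ContDiff ℝ (⊤ : ℕ∞) ψ) (hnz : ∀ x, ψ x ≠ 0) :
    ∃ L : E → ℂ, ContDiff ℝ (⊤ : ℕ∞) L ∧ ∀ x, Complex.exp (L x) = ψ x := by
  have hψdiff : Differentiable ℝ ψ := hψ.differentiable (by simp)
  set g : E → ℝ → ℂ := fun x t => fderiv ℝ ψ (t • x) x / ψ (t • x) with hg
  have hgc : Continuous (Function.uncurry g) := by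
    have hfd : Continuous (fderiv ℝ ψ) := hψ.continuous_fderiv (by simp)
    have hsm : Continuous (fun p : E × ℝ => p.2 • p.1) := continuous_snd.smul continuous_fst
    exact ((hfd.comp hsm).clm_apply continuous_fst).div (hψ.continuous.comp hsm)
      (fun p => hnz _)
  set L : E → ℂ := fun x => Complex.log (ψ 0) + ∫ t in (0:ℝ)..1, g x t with hL
  have hexp : ∀ x, Complex.exp (L x) = ψ x := by
    intro x
    have hgx : Continuous (g x) := by
      have : Continuous (fun t : ℝ => (x, t)) := Continuous.prodMk continuous_const continuous_id
      exact hgc.comp this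
    set F : ℝ → ℂ := fun t => ∫ s in (0:ℝ)..t, g x s with hF
    have hFd : ∀ t, HasDerivAt F (g x t) t := fun t =>
      intervalIntegral.integral_hasDerivAt_right (hgx.intervalIntegrable _ _)
        hgx.stronglyMeasurable.stronglyMeasurableAtFilter hgx.continuousAt
    have hψd : ∀ t : ℝ, HasDerivAt (fun t : ℝ => ψ (t • x)) (fderiv ℝ ψ (t • x) x) t := by
      intro t
      have h1 : HasDerivAt (fun t : ℝ => t • x) x t := by
        simpa using (hasDerivAt_id t).smul_const x
      exact (hψdiff _).hasFDerivAt.comp_hasDerivAt t h1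
    set u : ℝ → ℂ := fun t => ψ (t • x) * Complex.exp (-F t) with hu
    have hud : ∀ t, HasDerivAt u 0 t := by
      intro t
      have h2 := ((hFd t).neg).cexp
      have h3 := (hψd t).mul h2
      have h0 : fderiv ℝ ψ (t • x) x * Complex.exp (-F t)
          + ψ (t • x) * (Complex.exp (-F t) * -g x t) = 0 := by
        have hne := hnz (t • x)
        rw [hg]
        field_simp
        ring
      simp only [Pi.neg_apply] at h3
      rw [h0] at h3
      exact h3
    have hconst := is_const_of_deriv_eq_zero (fun t => (hud t).differentiableAt)
        (fun t => (hud t).deriv) 1 0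
    have h4 : ψ x * Complex.exp (-F 1) = ψ 0 := by
      simpa [hu, hF, intervalIntegral.integral_same] using hconst
    have h5 : Complex.exp (L x) = ψ 0 * Complex.exp (F 1) := by
      rw [hL]; rw [Complex.exp_add, Complex.exp_log (hnz 0)]
    rw [h5, ← h4]
    rw [mul_assoc, ← Complex.exp_add]
    simp
  refine ⟨L, ?_, hexp⟩
  rw [contDiff_iff_contDiffAt]
  intro x₀
  have hLc : Continuous L :=
    continuous_const.add (intervalIntegral.continuous_parametric_intervalIntegral_of_continuous' hgc 0 1)
  have hG : ContDiffAt ℝ (⊤ : ℕ∞) (fun x => L x₀ + Complex.log (ψ x / ψ x₀)) x₀ := by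
    have hdiv : ContDiffAt ℝ (⊤ : ℕ∞) (fun x => ψ x / ψ x₀) x₀ := hψ.contDiffAt.div_const _
    have hmem : ψ x₀ / ψ x₀ ∈ Complex.slitPlane := by
      rw [div_self (hnz x₀)]; exact Complex.one_mem_slitPlane
    have hlog : ContDiffAt ℂ ⊤ Complex.log (ψ x₀ / ψ x₀) := Complex.contDiffAt_log hmem
    exact contDiffAt_const.add (ContDiffAt.comp (g := Complex.log) x₀ ((hlog.restrict_scalars ℝ).of_le le_top) hdiv)
  refine hG.congr_of_eventuallyEq ?_
  set D : E → ℂ := fun x => L x - (L x₀ + Complex.log (ψ x / ψ x₀)) with hD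
  have hDc : ContinuousAt D x₀ := by
    have h1 : ContinuousAt (fun x => Complex.log (ψ x / ψ x₀)) x₀ := by
      refine (continuousAt_clog ?_).comp ((hψ.continuous.continuousAt).div_const _)
      rw [div_self (hnz x₀)]; exact Complex.one_mem_slitPlane
    exact (hLc.continuousAt).sub (continuousAt_const.add h1)
  have hD0 : D x₀ = 0 := by simp [hD, div_self (hnz x₀), Complex.log_one]
  have htend : Filter.Tendsto D (nhds x₀) (nhds 0) := hD0 ▸ hDc
  have hball : ∀ᶠ x in nhds x₀, ‖D x‖ < 1 := by
    have := Metric.tendsto_nhds.mp htend 1 one_pos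
    simpa [dist_zero_right] using this
  filter_upwards [hball] with x hx
  have hexpD : Complex.exp (D x) = 1 := by
    rw [hD, Complex.exp_sub, hexp x, Complex.exp_add, hexp x₀,
      Complex.exp_log (div_ne_zero (hnz x) (hnz x₀))]
    rw [div_eq_one_iff_eq (mul_ne_zero (hnz x₀) (div_ne_zero (hnz x) (hnz x₀)))]
    field_simp [hnz x₀]
  obtain ⟨nn, hnn⟩ := Complex.exp_eq_one_iff.mp hexpD
  have hnn0 : nn = 0 := by
    by_contra hne
    have h1 : (1:ℝ) ≤ |(nn:ℝ)| := by
      have := Int.one_le_abs (by omega : nn ≠ 0)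
      exact_mod_cast this
    have h2 : ‖D x‖ = |(nn:ℝ)| * (2 * Real.pi) := by
      rw [hnn, norm_mul, norm_mul, norm_mul]
      simp only [Complex.norm_I, mul_one, Complex.norm_real, Real.norm_eq_abs]
      rw [Complex.norm_intCast]
      rw [_root_.abs_of_nonneg Real.pi_pos.le]
      norm_num
    rw [h2] at hx
    nlinarith [Real.pi_gt_three]
  rw [hnn0] at hnn
  simp only [Int.cast_zero, zero_mul] at hnn
  rw [hD] at hnn
  have := sub_eq_zero.mp hnn
  exact this
/-- every smooth nowhere-vanishing common eigenfunction of `ℋ` and of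
`𝒫_j = −i∂/∂r^j`, `j = k+1,…,n` (eigenvalues `E`, `π_j`) is quasiclassical: it has
the form `ψ = exp(i(S₀(r¹,…,r^k) + Σ_{j=k+1}^n π_j r^j))` with `S₀` a smooth solution
of the reduced Hamilton–Jacobi equation. -/
theorem eigenfunctions_are_quasiclassical_positive_potentials
    (m k n : ℕ) (hk : 1 ≤ k) (hn : 2 * k + m ≤ n)
    (c : ℕ → ℝ) (pp : ℕ → ℝ) (E : ℂ) (ε : ℂ)
    (hε : ε = E - (∑ j ∈ Finset.Icc (k + 1) ((n - m) / 2),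
            pp (n - m + 1 - j) * pp j : ℝ) -
          (((n - m - 2 * ((n - m) / 2) : ℕ) : ℝ) / 2 * pp (n - m - (n - m) / 2) ^ 2 : ℝ) -
          ((1/2) * ∑ j ∈ Finset.Icc (n - m + 1) n, pp j * pp (2 * n - m + 1 - j) : ℝ))
    (ψ : (Fin n → ℝ) → ℂ) (hsmooth : ContDiff ℝ (⊤ : ℕ∞) ψ)
    (hnz : ∀ r : Fin n → ℝ, ψ r ≠ 0)
    (heigH : ∀ r : Fin n → ℝ, Hop n m k c ψ r = E * ψ r)
    (heigP : ∀ j ∈ Finset.Icc (k + 1) n, ∀ r : Fin n → ℝ,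
      -Complex.I * fderiv ℝ ψ r (evec n j) = (pp j : ℂ) * ψ r) :
    ∃ S₀ : (Fin k → ℝ) → ℂ, ContDiff ℝ (⊤ : ℕ∞) S₀ ∧
      (∀ r : Fin n → ℝ,
        ∑ j ∈ Finset.Icc 1 k,
            (pp (n - m + 1 - j) : ℂ) *
              fderiv ℝ S₀ (fun t : Fin k => r ⟨(t : ℕ), by omega⟩) (evec k j) +
          ∑ j ∈ Finset.Icc 1 k, (c j : ℂ) * (Vpos j 1 (qe n m r) : ℝ) = ε) ∧
      (∀ r : Fin n → ℝ,
        ψ r = Complex.exp (Complex.I * (S₀ (fun t : Fin k => r ⟨(t : ℕ), by omega⟩) +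
          ∑ j ∈ Finset.Icc (k + 1) n, (pp j : ℂ) * (get n r j : ℝ)))) := by
  have hkn : k ≤ n := by omega
  have hψdiff : Differentiable ℝ ψ := hsmooth.differentiable (by simp)
  obtain ⟨L, hLsm, hLexp⟩ := aux_exists_log ψ hsmooth hnz
  have hLdiff : Differentiable ℝ L := hLsm.differentiable (by simp)
  -- fderiv of ψ in terms of L
  have hψLv : ∀ x v, fderiv ℝ ψ x v = ψ x * fderiv ℝ L x v := by
    intro x v
    have h1 : HasFDerivAt (fun y => Complex.exp (L y)) (Complex.exp (L x) • fderiv ℝ L x) x :=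
      (hLdiff x).hasFDerivAt.cexp
    have h2 : (fun y => Complex.exp (L y)) = ψ := funext hLexp
    rw [h2, hLexp] at h1
    rw [h1.fderiv]
    simp [smul_eq_mul]
  -- eigenvalue equations for momenta
  have hdψ : ∀ j, k+1 ≤ j → j ≤ n → ∀ x,
      fderiv ℝ ψ x (evec n j) = Complex.I * pp j * ψ x := by
    intro j h1 h2 x
    have h := heigP j (Finset.mem_Icc.mpr ⟨h1, h2⟩) x
    calc fderiv ℝ ψ x (evec n j)
        = Complex.I * (-Complex.I * fderiv ℝ ψ x (evec n j)) := by
          rw [← mul_assoc, mul_neg, Complex.I_mul_I, neg_neg, one_mul]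
      _ = Complex.I * pp j * ψ x := by rw [h]; ring
  have hdL : ∀ j, k+1 ≤ j → j ≤ n → ∀ x,
      fderiv ℝ L x (evec n j) = Complex.I * pp j := by
    intro j h1 h2 x
    apply mul_left_cancel₀ (hnz x)
    rw [← hψLv, hdψ j h1 h2 x]
    ring
  -- get and basis
  have hget : ∀ (v : Fin n → ℝ) (j : ℕ) (h1 : 1 ≤ j) (h2 : j ≤ n),
      get n v j = v ⟨j-1, by omega⟩ := by
    intro v j h1 h2
    unfold _root_.get
    rw [dif_pos ⟨h1, h2⟩]
  have hbasis : ∀ v : Fin n → ℝ, ∑ j ∈ Finset.Icc 1 n, get n v j • evec n j = v := by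
    intro v; funext t
    have ht := t.isLt
    rw [Finset.sum_apply]
    rw [Finset.sum_congr rfl (fun j _ => by
      simp only [Pi.smul_apply, evec, smul_eq_mul, mul_ite, mul_one, mul_zero] :
      ∀ j ∈ Finset.Icc 1 n, (get n v j • evec n j) t
        = if (t:ℕ)+1 = j then get n v j else 0)]
    rw [Finset.sum_ite_eq]
    rw [if_pos (Finset.mem_Icc.mpr ⟨by omega, by omega⟩)]
    rw [hget v _ (by omega) (by omega)]
    exact congrArg v (Fin.ext (by simp))
  have hCLMsum : ∀ (F : (Fin n → ℝ) →L[ℝ] ℂ) (v : Fin n → ℝ),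
      F v = ∑ j ∈ Finset.Icc 1 n, (get n v j : ℂ) * F (evec n j) := by
    intro F v
    conv_lhs => rw [← hbasis v]
    rw [map_sum]
    exact Finset.sum_congr rfl fun j _ => by rw [map_smul, Complex.real_smul]
  -- the linear part and its derivative
  set lin : (Fin n → ℝ) → ℂ :=
    fun r => ∑ j ∈ Finset.Icc (k+1) n, (pp j : ℂ) * ((get n r j : ℝ) : ℂ) with hlin
  set linCLM : (Fin n → ℝ) →L[ℝ] ℂ := ∑ j ∈ Finset.Icc (k+1) n,
      (if h : k+1 ≤ j ∧ j ≤ n then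
        Complex.ofRealCLM.comp ((pp j) • ContinuousLinearMap.proj (⟨j-1, by omega⟩ : Fin n))
      else 0) with hlinCLM
  have hlinFD : ∀ x, HasFDerivAt lin linCLM x := by
    intro x
    rw [hlin, hlinCLM]
    refine HasFDerivAt.fun_sum fun j hj => ?_
    rw [Finset.mem_Icc] at hj
    rw [dif_pos hj]
    have he : (fun r : Fin n → ℝ => (pp j : ℂ) * ((get n r j : ℝ) : ℂ))
        = ⇑(Complex.ofRealCLM.comp ((pp j) •
            ContinuousLinearMap.proj (⟨j-1, by omega⟩ : Fin n))) := by
      funext r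
      rw [hget r j (by omega) hj.2]
      symm
      simp only [ContinuousLinearMap.comp_apply, ContinuousLinearMap.smul_apply,
        ContinuousLinearMap.proj_apply, Complex.ofRealCLM_apply, smul_eq_mul]
      push_cast
      ring
    rw [he]
    exact (Complex.ofRealCLM.comp ((pp j) •
      ContinuousLinearMap.proj (⟨j-1, by omega⟩ : Fin n))).hasFDerivAt
  have hlinCLM_e : ∀ a, 1 ≤ a → a ≤ n → linCLM (evec n a)
      = if k+1 ≤ a then (pp a : ℂ) else 0 := by
    intro a h1 h2
    rw [hlinCLM, ContinuousLinearMap.sum_apply]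
    by_cases hka : k+1 ≤ a
    · rw [if_pos hka]
      rw [Finset.sum_eq_single a]
      · rw [dif_pos ⟨hka, h2⟩]
        simp only [ContinuousLinearMap.comp_apply, ContinuousLinearMap.smul_apply,
          ContinuousLinearMap.proj_apply, Complex.ofRealCLM_apply, smul_eq_mul]
        have hone : evec n a ⟨a-1, by omega⟩ = 1 := by
          simp only [evec]; rw [if_pos (show a - 1 + 1 = a by omega)]
        rw [hone, mul_one]
      · intro j hj hne
        rw [Finset.mem_Icc] at hj
        rw [dif_pos ⟨hj.1, hj.2⟩]
        simp only [ContinuousLinearMap.comp_apply, ContinuousLinearMap.smul_apply,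
          ContinuousLinearMap.proj_apply, Complex.ofRealCLM_apply, smul_eq_mul]
        have hzero : evec n a ⟨j-1, by omega⟩ = 0 := by
          simp only [evec]; rw [if_neg (show ¬(j - 1 + 1 = a) by omega)]
        rw [hzero, mul_zero]
        simp
      · intro hna
        exact absurd (Finset.mem_Icc.mpr ⟨hka, h2⟩) hna
    · rw [if_neg hka]
      refine Finset.sum_eq_zero fun j hj => ?_
      rw [Finset.mem_Icc] at hj
      rw [dif_pos ⟨hj.1, hj.2⟩]
      simp only [ContinuousLinearMap.comp_apply, ContinuousLinearMap.smul_apply,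
        ContinuousLinearMap.proj_apply, Complex.ofRealCLM_apply, smul_eq_mul]
      have hzero : evec n a ⟨j-1, by omega⟩ = 0 := by
        simp only [evec]; rw [if_neg (show ¬(j - 1 + 1 = a) by omega)]
      rw [hzero, mul_zero]
      simp
  -- the reduced phase function
  set Φ : (Fin n → ℝ) → ℂ := fun r => L r - Complex.I * lin r with hΦ
  have hΦFD : ∀ x, HasFDerivAt Φ (fderiv ℝ L x - Complex.I • linCLM) x := by
    intro x
    rw [hΦ]
    exact (hLdiff x).hasFDerivAt.sub ((hlinFD x).const_mul Complex.I)
  have hΦdiff : Differentiable ℝ Φ := fun x => (hΦFD x).differentiableAt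
  have hΦd : ∀ x v, fderiv ℝ Φ x v = fderiv ℝ L x v - Complex.I * linCLM v := by
    intro x v
    rw [(hΦFD x).fderiv]
    simp [smul_eq_mul]
  have hΦ0 : ∀ (v : Fin n → ℝ), (∀ i : Fin n, (i:ℕ) < k → v i = 0) →
      ∀ x, fderiv ℝ Φ x v = 0 := by
    intro v hv x
    rw [hΦd x v, hCLMsum (fderiv ℝ L x) v, hCLMsum linCLM v, Finset.mul_sum,
      ← Finset.sum_sub_distrib]
    refine Finset.sum_eq_zero fun j hj => ?_
    rw [Finset.mem_Icc] at hj
    by_cases hjk : k+1 ≤ j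
    · rw [hdL j hjk hj.2 x, hlinCLM_e j hj.1 hj.2, if_pos hjk]
      ring
    · have hg0 : get n v j = 0 := by
        rw [hget v j hj.1 hj.2]
        exact hv _ (by simp; omega)
      rw [hg0]
      push_cast
      ring
  -- projection and embedding
  set projL : (Fin n → ℝ) →L[ℝ] (Fin k → ℝ) :=
    ContinuousLinearMap.pi (fun t : Fin k =>
      ContinuousLinearMap.proj (⟨(t:ℕ), lt_of_lt_of_le t.isLt hkn⟩ : Fin n)) with hprojL
  set embL : (Fin k → ℝ) →L[ℝ] (Fin n → ℝ) :=
    ContinuousLinearMap.pi (fun i : Fin n =>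
      if h : (i:ℕ) < k then ContinuousLinearMap.proj (⟨(i:ℕ), h⟩ : Fin k) else 0) with hembL
  have hP : ∀ (r : Fin n → ℝ) (i : Fin n),
      embL (projL r) i = if (i:ℕ) < k then r i else 0 := by
    intro r i
    rw [hembL]
    simp only [ContinuousLinearMap.pi_apply]
    by_cases hik : (i:ℕ) < k
    · rw [dif_pos hik, if_pos hik]
      rw [hprojL]
      simp only [ContinuousLinearMap.proj_apply, ContinuousLinearMap.pi_apply]
    · rw [dif_neg hik, if_neg hik]
      simp
  have hembL_e : ∀ a, 1 ≤ a → a ≤ k → embL (evec k a) = evec n a := by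
    intro a h1 h2
    funext i
    rw [hembL]
    simp only [ContinuousLinearMap.pi_apply]
    by_cases hik : (i:ℕ) < k
    · rw [dif_pos hik]
      simp only [ContinuousLinearMap.proj_apply]
      rfl
    · rw [dif_neg hik]
      simp only [ContinuousLinearMap.zero_apply]
      symm
      simp only [evec]
      rw [if_neg (by omega)]
  have hprojL_e : ∀ a, 1 ≤ a → a ≤ k → projL (evec n a) = evec k a := by
    intro a h1 h2
    funext t
    rw [hprojL]
    simp only [ContinuousLinearMap.pi_apply, ContinuousLinearMap.proj_apply]
    rfl
  have hΦP : ∀ r, Φ (embL (projL r)) = Φ r := by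
    intro r
    have hv : ∀ i : Fin n, (i:ℕ) < k → (r - embL (projL r)) i = 0 := by
      intro i hi
      simp only [Pi.sub_apply]
      rw [hP r i, if_pos hi]
      ring
    have h := aux_const_dir Φ hΦdiff (r - embL (projL r)) (hΦ0 _ hv) (embL (projL r))
    have h2 : embL (projL r) + (r - embL (projL r)) = r := by abel
    rw [h2] at h
    exact h.symm
  have hΦchain : ∀ r, fderiv ℝ Φ r
      = (fderiv ℝ Φ (embL (projL r))).comp (embL.comp projL) := by
    intro r
    have h1 : HasFDerivAt (fun y => Φ ((embL.comp projL) y))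
        ((fderiv ℝ Φ (embL (projL r))).comp (embL.comp projL)) r := by
      have h0 := (hΦdiff (embL (projL r))).hasFDerivAt.comp r ((embL.comp projL).hasFDerivAt)
      exact h0
    have h2 : (fun y => Φ ((embL.comp projL) y)) = Φ := by
      funext y
      rw [ContinuousLinearMap.comp_apply]
      exact hΦP y
    rw [h2] at h1
    exact h1.fderiv
  refine ⟨fun x => -Complex.I * Φ (embL x), ?_, ?_, ?_⟩
  · -- smoothness
    have hlinsm : ContDiff ℝ (⊤ : ℕ∞) lin := by
      rw [hlin]
      refine ContDiff.sum fun j hj => ?_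
      rw [Finset.mem_Icc] at hj
      have he : (fun r : Fin n → ℝ => (pp j : ℂ) * ((get n r j : ℝ) : ℂ))
          = ⇑(Complex.ofRealCLM.comp ((pp j) •
              ContinuousLinearMap.proj (⟨j-1, by omega⟩ : Fin n))) := by
        funext r
        rw [hget r j (by omega) hj.2]
        symm
        simp only [ContinuousLinearMap.comp_apply, ContinuousLinearMap.smul_apply,
          ContinuousLinearMap.proj_apply, Complex.ofRealCLM_apply, smul_eq_mul]
        push_cast
        ring
      rw [he]
      exact (Complex.ofRealCLM.comp ((pp j) •
        ContinuousLinearMap.proj (⟨j-1, by omega⟩ : Fin n))).contDiff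
    have hΦsm : ContDiff ℝ (⊤ : ℕ∞) Φ := by
      rw [hΦ]
      exact hLsm.sub (contDiff_const.mul hlinsm)
    exact contDiff_const.mul (hΦsm.comp embL.contDiff)
  · -- Hamilton-Jacobi equation
    intro r
    have hpr0 : (fun t : Fin k => r ⟨(t : ℕ), by omega⟩) = projL r := by
      funext t
      rw [hprojL]
      simp only [ContinuousLinearMap.pi_apply, ContinuousLinearMap.proj_apply]
    rw [hpr0]
    have hS0d : ∀ a, 1 ≤ a → a ≤ k →
        fderiv ℝ (fun x => -Complex.I * Φ (embL x)) (projL r) (evec k a)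
          = -Complex.I * fderiv ℝ Φ (embL (projL r)) (evec n a) := by
      intro a h1 h2
      have hc : HasFDerivAt (fun x => Φ (embL x))
          ((fderiv ℝ Φ (embL (projL r))).comp embL) (projL r) := by
        have h0 := (hΦdiff (embL (projL r))).hasFDerivAt.comp (projL r) embL.hasFDerivAt
        exact h0
      have hm := hc.const_mul (-Complex.I)
      rw [hm.fderiv]
      simp only [ContinuousLinearMap.smul_apply, ContinuousLinearMap.comp_apply, smul_eq_mul]
      rw [hembL_e a h1 h2]
    have hLa : ∀ a, 1 ≤ a → a ≤ k →
        fderiv ℝ L r (evec n a)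
          = Complex.I * fderiv ℝ (fun x => -Complex.I * Φ (embL x)) (projL r) (evec k a) := by
      intro a h1 h2
      have e1 : fderiv ℝ L r (evec n a) = fderiv ℝ Φ r (evec n a) := by
        rw [hΦd r (evec n a), hlinCLM_e a (by omega) (by omega), if_neg (by omega)]
        ring
      have e2 : fderiv ℝ Φ r (evec n a) = fderiv ℝ Φ (embL (projL r)) (evec n a) := by
        rw [hΦchain r]
        simp only [ContinuousLinearMap.comp_apply]
        rw [hprojL_e a h1 h2, hembL_e a h1 h2]
      rw [e1, e2, hS0d a h1 h2]
      rw [← mul_assoc, mul_neg, Complex.I_mul_I, neg_neg, one_mul]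
    have hσ : ∀ a, 1 ≤ a → a ≤ k →
        fderiv ℝ ψ r (evec n a)
          = ψ r * (Complex.I *
            fderiv ℝ (fun x => -Complex.I * Φ (embL x)) (projL r) (evec k a)) := by
      intro a h1 h2
      rw [hψLv r (evec n a), hLa a h1 h2]
    have hD2b : ∀ a b, k+1 ≤ b → b ≤ n →
        D2 n ψ r a b = Complex.I * pp b * fderiv ℝ ψ r (evec n a) := by
      intro a b h1 h2
      have hfun : (fun w => fderiv ℝ ψ w (evec n b))
          = fun w => (Complex.I * pp b) * ψ w := by
        funext w
        rw [hdψ b h1 h2 w]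
      unfold D2
      rw [hfun, fderiv_const_mul (hψdiff r)]
      simp only [ContinuousLinearMap.smul_apply, smul_eq_mul]
    have hf' : ContDiff ℝ (⊤ : ℕ∞) (fderiv ℝ ψ) := hsmooth.fderiv_right (by simp)
    have hD2eq : ∀ a b : ℕ, D2 n ψ r a b
        = fderiv ℝ (fderiv ℝ ψ) r (evec n a) (evec n b) := by
      intro a b
      unfold D2
      have h1 : HasFDerivAt (fun w => fderiv ℝ ψ w (evec n b))
          ((ContinuousLinearMap.apply ℝ ℂ (evec n b)).comp (fderiv ℝ (fderiv ℝ ψ) r)) r := by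
        have h0 := (ContinuousLinearMap.apply ℝ ℂ (evec n b)).hasFDerivAt.comp r
          ((hf'.differentiable (by simp)) r).hasFDerivAt
        exact h0
      rw [h1.fderiv]
      rfl
    have hSch : ∀ a b : ℕ, D2 n ψ r a b = D2 n ψ r b a := by
      intro a b
      rw [hD2eq, hD2eq]
      exact (hsmooth.contDiffAt.isSymmSndFDerivAt (by rw [minSmoothness_of_isRCLikeNormedField]; exact WithTop.coe_le_coe.mpr (le_top : (2:ℕ∞) ≤ ⊤))).eq (evec n a) (evec n b)
    have hIccIoc : ∀ a b : ℕ, Finset.Icc (a+1) b = Finset.Ioc a b := by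
      intro a b; ext x; simp only [Finset.mem_Icc, Finset.mem_Ioc]; omega
    have hsplitA : ∑ a ∈ Finset.Icc 1 (n - m), D2 n ψ r a (n - m + 1 - a)
        = (∑ a ∈ Finset.Icc 1 k, D2 n ψ r a (n - m + 1 - a))
          + (∑ a ∈ Finset.Icc (k+1) (n-m-k), D2 n ψ r a (n - m + 1 - a))
          + (∑ a ∈ Finset.Icc (n-m-k+1) (n-m), D2 n ψ r a (n - m + 1 - a)) := by
      rw [show Finset.Icc 1 (n-m) = Finset.Ioc 0 (n-m) from hIccIoc 0 (n-m),
        show Finset.Icc 1 k = Finset.Ioc 0 k from hIccIoc 0 k,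
        hIccIoc k (n-m-k), hIccIoc (n-m-k) (n-m)]
      rw [← Finset.sum_Ioc_consecutive (fun a => D2 n ψ r a (n - m + 1 - a))
        (show (0:ℕ) ≤ k by omega) (show k ≤ n - m by omega)]
      rw [← Finset.sum_Ioc_consecutive (fun a => D2 n ψ r a (n - m + 1 - a))
        (show (k:ℕ) ≤ n-m-k by omega) (show n-m-k ≤ n - m by omega)]
      ring
    have hpart1 : ∑ a ∈ Finset.Icc 1 k, D2 n ψ r a (n - m + 1 - a)
        = -((∑ j ∈ Finset.Icc 1 k, (pp (n - m + 1 - j) : ℂ) *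
            fderiv ℝ (fun x => -Complex.I * Φ (embL x)) (projL r) (evec k j)) * ψ r) := by
      rw [Finset.sum_mul, ← Finset.sum_neg_distrib]
      refine Finset.sum_congr rfl fun a ha => ?_
      rw [Finset.mem_Icc] at ha
      rw [hD2b a (n-m+1-a) (by omega) (by omega), hσ a ha.1 ha.2]
      linear_combination ((pp (n - m + 1 - a) : ℂ) *
        fderiv ℝ (fun x => -Complex.I * Φ (embL x)) (projL r) (evec k a) * ψ r) * Complex.I_sq
    have hpart3 : ∑ a ∈ Finset.Icc (n-m-k+1) (n-m), D2 n ψ r a (n - m + 1 - a)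
        = -((∑ j ∈ Finset.Icc 1 k, (pp (n - m + 1 - j) : ℂ) *
            fderiv ℝ (fun x => -Complex.I * Φ (embL x)) (projL r) (evec k j)) * ψ r) := by
      have step1 : ∀ a ∈ Finset.Icc (n-m-k+1) (n-m), D2 n ψ r a (n - m + 1 - a)
          = -((pp a : ℂ) * fderiv ℝ (fun x => -Complex.I * Φ (embL x)) (projL r)
              (evec k (n - m + 1 - a)) * ψ r) := by
        intro a ha
        rw [Finset.mem_Icc] at ha
        rw [hSch a (n-m+1-a), hD2b (n-m+1-a) a (by omega) (by omega),
          hσ (n-m+1-a) (by omega) (by omega)]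
        linear_combination ((pp a : ℂ) * fderiv ℝ (fun x => -Complex.I * Φ (embL x))
          (projL r) (evec k (n - m + 1 - a)) * ψ r) * Complex.I_sq
      rw [Finset.sum_congr rfl step1]
      rw [aux_reflect (fun a => -((pp a : ℂ) *
        fderiv ℝ (fun x => -Complex.I * Φ (embL x)) (projL r) (evec k (n - m + 1 - a)) * ψ r))
        (n-m-k+1) (n-m) (n-m) le_rfl]
      rw [show n-m+1-(n-m) = 1 by omega, show n-m+1-(n-m-k+1) = k by omega]
      rw [Finset.sum_mul, ← Finset.sum_neg_distrib]
      refine Finset.sum_congr rfl fun j hj => ?_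
      rw [Finset.mem_Icc] at hj
      rw [show n-m+1-(n-m+1-j) = j by omega]
    have hpart2 : ∑ a ∈ Finset.Icc (k+1) (n-m-k), D2 n ψ r a (n - m + 1 - a)
        = -(((∑ a ∈ Finset.Icc (k+1) (n-m-k), pp a * pp (n-m+1-a) : ℝ) : ℂ) * ψ r) := by
      push_cast
      rw [Finset.sum_mul, ← Finset.sum_neg_distrib]
      refine Finset.sum_congr rfl fun a ha => ?_
      rw [Finset.mem_Icc] at ha
      rw [hD2b a (n-m+1-a) (by omega) (by omega), hdψ a (by omega) (by omega)]
      linear_combination ((pp a : ℂ) * (pp (n-m+1-a) : ℂ) * ψ r) * Complex.I_sq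
    have hpartB : ∑ b ∈ Finset.Icc (n-m+1) n, D2 n ψ r b (2*n - m + 1 - b)
        = -(((∑ b ∈ Finset.Icc (n-m+1) n, pp b * pp (2*n-m+1-b) : ℝ) : ℂ) * ψ r) := by
      push_cast
      rw [Finset.sum_mul, ← Finset.sum_neg_distrib]
      refine Finset.sum_congr rfl fun b hb => ?_
      rw [Finset.mem_Icc] at hb
      rw [hD2b b (2*n-m+1-b) (by omega) (by omega), hdψ b (by omega) (by omega)]
      linear_combination ((pp b : ℂ) * (pp (2*n-m+1-b) : ℂ) * ψ r) * Complex.I_sq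
    have e1 := heigH r
    unfold Hop at e1
    have hfold := aux_fold pp k (n-m) (by omega)
    have hfoldC : ((∑ a ∈ Finset.Icc (k+1) (n-m-k), pp a * pp (n-m+1-a) : ℝ) : ℂ)
        = 2 * ((∑ j ∈ Finset.Icc (k+1) ((n-m)/2), pp (n-m+1-j) * pp j : ℝ) : ℂ)
          + ((n - m - 2*((n-m)/2) : ℕ) : ℂ) * ((pp (n-m-(n-m)/2) : ℝ) : ℂ)^2 := by
      rw [hfold]
      push_cast
      ring
    have key : ψ r * ((∑ j ∈ Finset.Icc 1 k, (pp (n - m + 1 - j) : ℂ) *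
          fderiv ℝ (fun x => -Complex.I * Φ (embL x)) (projL r) (evec k j))
        + ∑ j ∈ Finset.Icc 1 k, (c j : ℂ) * (Vpos j 1 (qe n m r) : ℝ)) = ψ r * ε := by
      rw [hε]
      rw [hsplitA, hpart1, hpart2, hpart3, hpartB] at e1
      push_cast at e1 hfoldC ⊢
      linear_combination e1 - (ψ r / 2) * hfoldC
    exact mul_left_cancel₀ (hnz r) key
  · -- exponential form
    intro r
    have hpr0 : (fun t : Fin k => r ⟨(t : ℕ), by omega⟩) = projL r := by
      funext t
      rw [hprojL]
      simp only [ContinuousLinearMap.pi_apply, ContinuousLinearMap.proj_apply]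
    rw [hpr0]
    have hkey : Complex.I * (-Complex.I * Φ (embL (projL r)) + lin r) = L r := by
      rw [hΦP r]
      rw [hΦ]
      linear_combination (-(L r) + Complex.I * lin r) * Complex.I_sq
    rw [show (∑ j ∈ Finset.Icc (k + 1) n, (pp j : ℂ) * ((get n r j : ℝ) : ℂ)) = lin r
      from rfl]
    rw [hkey]
    exact (hLexp r).symm
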